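/- Let A and B be finite lattices and C a sub-tensor product of A and B (a subset of the bi-ideal lattice of A × B that is a lattice under containment, closed under finite intersection, and containing all mixed tensors). Then the join-irreducible elements of C are exactly the pure tensors a ⊗ b for a ∈ J(A) and b ∈ J(B), and the unique lower cover of a ⊗ b in C is (a_* ⊗ b) ∪ (a ⊗ b_*). -/
import Mathlib


section
variable (A B : Type*) [Lattice A] [OrderBot A] [Lattice B] [OrderBot B]

/-- The bottom bi-ideal `⊥ = (A × {0}) ∪ ({0} × B)`. -/
def botBiIdeal : Set (A × B) := {z | z.2 = ⊥} ∪ {z | z.1 = ⊥}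

/-- A bi-ideal of `A × B`. -/
def IsBiIdeal (I : Set (A × B)) : Prop :=
  botBiIdeal A B ⊆ I ∧ (∀ z w : A × B, w ∈ I → z.1 ≤ w.1 → z.2 ≤ w.2 → z ∈ I) ∧
    (∀ a : A, ∀ x y : B, (a, x) ∈ I → (a, y) ∈ I → (a, x ⊔ y) ∈ I) ∧
    (∀ x y : A, ∀ b : B, (x, b) ∈ I → (y, b) ∈ I → (x ⊔ y, b) ∈ I)

/-- The pure tensor `a ⊗ b`. -/
def pureTensor (a : A) (b : B) : Set (A × B) :=
  botBiIdeal A B ∪ {z | z.1 ≤ a ∧ z.2 ≤ b}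

/-- A sub-tensor product of `A` and `B`: a set of bi-ideals that is a lattice under
containment, is closed under finite intersection, and contains all mixed tensors. -/
def IsSubTensorProduct (C : Set (Set (A × B))) : Prop :=
  (∀ X ∈ C, IsBiIdeal A B X) ∧
  (∀ X ∈ C, ∀ Y ∈ C,
    (∃ Z, IsLeast {W | W ∈ C ∧ X ⊆ W ∧ Y ⊆ W} Z) ∧
    (∃ Z, IsGreatest {W | W ∈ C ∧ W ⊆ X ∧ W ⊆ Y} Z)) ∧
  (∀ X ∈ C, ∀ Y ∈ C, X ∩ Y ∈ C) ∧
  (∀ a a' : A, ∀ b b' : B, a ≤ a' → b ≤ b' →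
    pureTensor A B a b' ∪ pureTensor A B a' b ∈ C)

/-- `X` is the join of `Y` and `Z` within `C` (ordered by containment). -/
def IsLUBin (C : Set (Set (A × B))) (Y Z X : Set (A × B)) : Prop :=
  X ∈ C ∧ Y ⊆ X ∧ Z ⊆ X ∧ ∀ W ∈ C, Y ⊆ W → Z ⊆ W → X ⊆ W

/-- `X` is join-irreducible in the lattice `(C, ⊆)`. -/
def JoinIrredIn (C : Set (Set (A × B))) (X : Set (A × B)) : Prop :=
  X ∈ C ∧ (∃ W ∈ C, ¬ X ⊆ W) ∧
    ∀ Y ∈ C, ∀ Z ∈ C, IsLUBin A B C Y Z X → X = Y ∨ X = Z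

/-- `a` is completely join-irreducible with unique lower cover `astar`. -/
def IsCJI {L : Type*} [Lattice L] (a astar : L) : Prop :=
  astar < a ∧ ∀ x < a, x ≤ astar

end

section helpers
variable {A B : Type*} [Lattice A] [OrderBot A] [Lattice B] [OrderBot B]

lemma exists_cji {L : Type*} [Lattice L] [OrderBot L] [Fintype L] {a : L}
    (ha : SupIrred a) : ∃ astar, IsCJI a astar := by
  classical
  refine ⟨(Finset.univ.filter (· < a)).sup id, ?_, ?_⟩
  · refine lt_of_le_of_ne (Finset.sup_le fun x hx => ?_) fun h => ?_
    · exact (Finset.mem_filter.1 hx).2.le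
    · obtain ⟨i, hi, hia⟩ := ha.finset_sup_eq h
      exact absurd hia (Finset.mem_filter.1 hi).2.ne
  · intro x hx
    exact Finset.le_sup (f := id) (Finset.mem_filter.2 ⟨Finset.mem_univ _, hx⟩)

lemma mem_pureTensor_self (a : A) (b : B) : (a, b) ∈ pureTensor A B a b :=
  Or.inr ⟨le_rfl, le_rfl⟩

lemma pureTensor_mono {a a' : A} {b b' : B} (ha : a ≤ a') (hb : b ≤ b') :
    pureTensor A B a b ⊆ pureTensor A B a' b' := by
  rintro z (hz | ⟨h1, h2⟩)
  · exact Or.inl hz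
  · exact Or.inr ⟨h1.trans ha, h2.trans hb⟩

lemma pureTensor_bot_left (b : B) : pureTensor A B (⊥ : A) b ⊆ botBiIdeal A B := by
  rintro z (hz | ⟨h1, _⟩)
  · exact hz
  · exact Or.inr (le_bot_iff.1 h1)

lemma pureTensor_bot_right (a : A) : pureTensor A B a (⊥ : B) ⊆ botBiIdeal A B := by
  rintro z (hz | ⟨_, h2⟩)
  · exact hz
  · exact Or.inl (le_bot_iff.1 h2)

lemma pureTensor_subset_of_mem {X : Set (A × B)} (hX : IsBiIdeal A B X) {a : A} {b : B}
    (h : (a, b) ∈ X) : pureTensor A B a b ⊆ X := by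
  rintro z (hz | ⟨h1, h2⟩)
  · exact hX.1 hz
  · exact hX.2.1 z (a, b) h h1 h2

variable {C : Set (Set (A × B))}

lemma pureTensor_mem (hC : IsSubTensorProduct A B C) (a : A) (b : B) : pureTensor A B a b ∈ C := by
  have := hC.2.2.2 a a b b le_rfl le_rfl
  rwa [Set.union_self] at this

lemma exists_join (hC : IsSubTensorProduct A B C) (F : Finset (Set (A × B))) (hF : ∀ T ∈ F, T ∈ C) :
    ∃ K, K ∈ C ∧ (∀ T ∈ F, T ⊆ K) ∧ ∀ W ∈ C, (∀ T ∈ F, T ⊆ W) → K ⊆ W := by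
  classical
  induction F using Finset.induction_on with
  | empty =>
    exact ⟨pureTensor A B ⊥ ⊥, pureTensor_mem hC ⊥ ⊥, by simp,
      fun W hW _ => (pureTensor_bot_left _).trans (hC.1 W hW).1⟩
  | @insert T F' hTF ih =>
    obtain ⟨K, hKC, hKub, hKle⟩ := ih (fun S hS => hF S (Finset.mem_insert_of_mem hS))
    obtain ⟨Z, hZ⟩ := (hC.2.1 T (hF T (Finset.mem_insert_self T F')) K hKC).1
    refine ⟨Z, hZ.1.1, ?_, ?_⟩
    · intro S hS
      rcases Finset.mem_insert.1 hS with rfl | hS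
      · exact hZ.1.2.1
      · exact (hKub S hS).trans hZ.1.2.2
    · intro W hW hub
      exact hZ.2 ⟨hW, hub T (Finset.mem_insert_self _ _),
        hKle W hW (fun S hS => hub S (Finset.mem_insert_of_mem hS))⟩

lemma joinIrred_mem_family (hC : IsSubTensorProduct A B C) {X : Set (A × B)} (hX : JoinIrredIn A B C X) :
    ∀ F : Finset (Set (A × B)), (∀ T ∈ F, T ∈ C ∧ T ⊆ X) →
      (∀ W ∈ C, (∀ T ∈ F, T ⊆ W) → X ⊆ W) → ∃ T ∈ F, X = T := by
  classical
  intro F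
  induction F using Finset.induction_on with
  | empty =>
    intro _ hjoin
    obtain ⟨W, hW, hXW⟩ := hX.2.1
    exact absurd ((hjoin (pureTensor A B ⊥ ⊥) (pureTensor_mem hC ⊥ ⊥) (by simp)).trans
      ((pureTensor_bot_left _).trans (hC.1 W hW).1)) hXW
  | @insert T F' hTF ih =>
    intro hF hjoin
    obtain ⟨K, hKC, hKub, hKle⟩ :=
      exists_join hC F' (fun S hS => (hF S (Finset.mem_insert_of_mem hS)).1)
    have hKX : K ⊆ X := hKle X hX.1 (fun S hS => (hF S (Finset.mem_insert_of_mem hS)).2)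
    have hTC := hF T (Finset.mem_insert_self T F')
    have hlub : IsLUBin A B C T K X :=
      ⟨hX.1, hTC.2, hKX, fun W hW hTW hKW =>
        hjoin W hW (fun S hS => by
          rcases Finset.mem_insert.1 hS with rfl | hS
          · exact hTW
          · exact (hKub S hS).trans hKW)⟩
    rcases hX.2.2 T hTC.1 K hKC hlub with h | h
    · exact ⟨T, Finset.mem_insert_self _ _, h⟩
    · obtain ⟨S, hS, hXS⟩ := ih (fun S hS => hF S (Finset.mem_insert_of_mem hS))
        (fun W hW hub => h ▸ hKle W hW hub)
      exact ⟨S, Finset.mem_insert_of_mem hS, hXS⟩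

lemma ab_notMem_mixed {a astar : A} {b bstar : B} (ha : IsCJI a astar) (hb : IsCJI b bstar) :
    (a, b) ∉ pureTensor A B astar b ∪ pureTensor A B a bstar := by
  have hane : a ≠ ⊥ := (bot_le.trans_lt ha.1).ne'
  have hbne : b ≠ ⊥ := (bot_le.trans_lt hb.1).ne'
  rintro (((h | h) | ⟨h1, _⟩) | ((h | h) | ⟨_, h2⟩))
  · exact hbne h
  · exact hane h
  · exact absurd h1 ha.1.not_ge
  · exact hbne h
  · exact hane h
  · exact absurd h2 hb.1.not_ge

lemma mixed_lt {a astar : A} {b bstar : B} (ha : IsCJI a astar) (hb : IsCJI b bstar) :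
    (pureTensor A B astar b ∪ pureTensor A B a bstar) ⊂ pureTensor A B a b := by
  constructor
  · exact Set.union_subset (pureTensor_mono ha.1.le le_rfl) (pureTensor_mono le_rfl hb.1.le)
  · intro hsub
    exact ab_notMem_mixed ha hb (hsub (mem_pureTensor_self a b))

lemma lower_cover_lemma {a astar : A} {b bstar : B} (ha : IsCJI a astar) (hb : IsCJI b bstar)
    {W : Set (A × B)} (hW : IsBiIdeal A B W) (hWlt : W ⊂ pureTensor A B a b) :
    W ⊆ pureTensor A B astar b ∪ pureTensor A B a bstar := by
  intro z hz
  by_cases hab : (a, b) ∈ W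
  · exact absurd (pureTensor_subset_of_mem hW hab) hWlt.2
  · rcases hWlt.1 hz with hzb | ⟨h1, h2⟩
    · exact Or.inl (Or.inl hzb)
    · by_cases h1' : z.1 ≤ astar
      · exact Or.inl (Or.inr ⟨h1', h2⟩)
      · have hz1 : z.1 = a := by
          rcases lt_or_eq_of_le h1 with h | h
          · exact absurd (ha.2 _ h) h1'
          · exact h
        by_cases h2' : z.2 ≤ bstar
        · exact Or.inr (Or.inr ⟨h1, h2'⟩)
        · have hz2 : z.2 = b := by
            rcases lt_or_eq_of_le h2 with h | h
            · exact absurd (hb.2 _ h) h2'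
            · exact h
          exact absurd (show (a, b) ∈ W by rw [← hz1, ← hz2]; exact hz) hab

end helpers

/-- For finite lattices `A`, `B` and a sub-tensor product `C`, the join-irreducible
elements of `C` are exactly the pure tensors `a ⊗ b` with `a ∈ J(A)`, `b ∈ J(B)`; the
unique lower cover of `a ⊗ b` in `C` is the mixed tensor `(a_* ⊗ b) ∪ (a ⊗ b_*)`. -/
theorem subTensorProduct_joinIrreducibles {A B : Type*}
    [Lattice A] [OrderBot A] [Fintype A] [Lattice B] [OrderBot B] [Fintype B]
    (C : Set (Set (A × B))) (hC : IsSubTensorProduct A B C) :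
    (∀ X : Set (A × B), JoinIrredIn A B C X ↔
        ∃ a : A, ∃ b : B, SupIrred a ∧ SupIrred b ∧ X = pureTensor A B a b) ∧
    (∀ (a astar : A) (b bstar : B), IsCJI a astar → IsCJI b bstar →
        (pureTensor A B astar b ∪ pureTensor A B a bstar) ⊂ pureTensor A B a b ∧
        ∀ W ∈ C, W ⊂ pureTensor A B a b →
          W ⊆ pureTensor A B astar b ∪ pureTensor A B a bstar) := by
  classical
  constructor
  · intro X
    constructor
    · intro hX
      have hXbi := hC.1 X hX.1
      obtain ⟨T, hTF, hXT⟩ := joinIrred_mem_family hC hX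
        ((Set.toFinite X).toFinset.image fun z => pureTensor A B z.1 z.2)
        (by
          intro T hT
          obtain ⟨z, hz, rfl⟩ := Finset.mem_image.1 hT
          rw [Set.Finite.mem_toFinset] at hz
          exact ⟨pureTensor_mem hC _ _, pureTensor_subset_of_mem hXbi hz⟩)
        (by
          intro W hW hub z hz
          exact hub _ (Finset.mem_image.2 ⟨z, (Set.Finite.mem_toFinset _).2 hz, rfl⟩)
            (mem_pureTensor_self z.1 z.2))
      obtain ⟨z, hzX, rfl⟩ := Finset.mem_image.1 hTF
      have hane : z.1 ≠ ⊥ := by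
        intro h
        obtain ⟨W, hW, hXW⟩ := hX.2.1
        apply hXW
        rw [hXT, h]
        exact (pureTensor_bot_left z.2).trans (hC.1 W hW).1
      have hbne : z.2 ≠ ⊥ := by
        intro h
        obtain ⟨W, hW, hXW⟩ := hX.2.1
        apply hXW
        rw [hXT, h]
        exact (pureTensor_bot_right z.1).trans (hC.1 W hW).1
      have mem1 : (z.1, z.2) ∈ X := by rw [hXT]; exact mem_pureTensor_self _ _
      have hsa : SupIrred z.1 := by
        refine ⟨fun h => hane (le_bot_iff.1 (h bot_le)), ?_⟩
        intro a1 a2 hsup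
        have h1 : pureTensor A B a1 z.2 ⊆ X := by
          rw [hXT]; exact pureTensor_mono (hsup ▸ le_sup_left) le_rfl
        have h2 : pureTensor A B a2 z.2 ⊆ X := by
          rw [hXT]; exact pureTensor_mono (hsup ▸ le_sup_right) le_rfl
        have hlub : IsLUBin A B C (pureTensor A B a1 z.2) (pureTensor A B a2 z.2) X := by
          refine ⟨hX.1, h1, h2, fun W hW hW1 hW2 => ?_⟩
          have hm : (a1 ⊔ a2, z.2) ∈ W :=
            (hC.1 W hW).2.2.2 a1 a2 z.2 (hW1 (mem_pureTensor_self _ _))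
              (hW2 (mem_pureTensor_self _ _))
          rw [hsup] at hm
          rw [hXT]
          exact pureTensor_subset_of_mem (hC.1 W hW) hm
        rcases hX.2.2 _ (pureTensor_mem hC a1 z.2) _ (pureTensor_mem hC a2 z.2) hlub
          with h | h
        · left
          rw [h] at mem1
          rcases mem1 with (hb | hb) | ⟨hle, _⟩
          · exact absurd hb hbne
          · exact absurd hb hane
          · exact le_antisymm (hsup ▸ le_sup_left) hle
        · right
          rw [h] at mem1
          rcases mem1 with (hb | hb) | ⟨hle, _⟩
          · exact absurd hb hbne
          · exact absurd hb hane
          · exact le_antisymm (hsup ▸ le_sup_right) hle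
      have hsb : SupIrred z.2 := by
        refine ⟨fun h => hbne (le_bot_iff.1 (h bot_le)), ?_⟩
        intro b1 b2 hsup
        have h1 : pureTensor A B z.1 b1 ⊆ X := by
          rw [hXT]; exact pureTensor_mono le_rfl (hsup ▸ le_sup_left)
        have h2 : pureTensor A B z.1 b2 ⊆ X := by
          rw [hXT]; exact pureTensor_mono le_rfl (hsup ▸ le_sup_right)
        have hlub : IsLUBin A B C (pureTensor A B z.1 b1) (pureTensor A B z.1 b2) X := by
          refine ⟨hX.1, h1, h2, fun W hW hW1 hW2 => ?_⟩
          have hm : (z.1, b1 ⊔ b2) ∈ W :=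
            (hC.1 W hW).2.2.1 z.1 b1 b2 (hW1 (mem_pureTensor_self _ _))
              (hW2 (mem_pureTensor_self _ _))
          rw [hsup] at hm
          rw [hXT]
          exact pureTensor_subset_of_mem (hC.1 W hW) hm
        rcases hX.2.2 _ (pureTensor_mem hC z.1 b1) _ (pureTensor_mem hC z.1 b2) hlub
          with h | h
        · left
          rw [h] at mem1
          rcases mem1 with (hb | hb) | ⟨_, hle⟩
          · exact absurd hb hbne
          · exact absurd hb hane
          · exact le_antisymm (hsup ▸ le_sup_left) hle
        · right
          rw [h] at mem1
          rcases mem1 with (hb | hb) | ⟨_, hle⟩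
          · exact absurd hb hbne
          · exact absurd hb hane
          · exact le_antisymm (hsup ▸ le_sup_right) hle
      exact ⟨z.1, z.2, hsa, hsb, hXT⟩
    · rintro ⟨a, b, hsa, hsb, rfl⟩
      obtain ⟨astar, hastar⟩ := exists_cji hsa
      obtain ⟨bstar, hbstar⟩ := exists_cji hsb
      have hane : a ≠ ⊥ := (bot_le.trans_lt hastar.1).ne'
      have hbne : b ≠ ⊥ := (bot_le.trans_lt hbstar.1).ne'
      refine ⟨pureTensor_mem hC a b, ⟨pureTensor A B ⊥ ⊥, pureTensor_mem hC ⊥ ⊥, ?_⟩, ?_⟩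
      · intro hsub
        rcases pureTensor_bot_left _ (hsub (mem_pureTensor_self a b)) with h | h
        · exact hbne h
        · exact hane h
      · intro Y hY Z hZ hlub
        by_cases hab : (a, b) ∈ Y
        · exact Or.inl (Set.Subset.antisymm
            (pureTensor_subset_of_mem (hC.1 Y hY) hab) hlub.2.1)
        by_cases hab' : (a, b) ∈ Z
        · exact Or.inr (Set.Subset.antisymm
            (pureTensor_subset_of_mem (hC.1 Z hZ) hab') hlub.2.2.1)
        exfalso
        have hM : pureTensor A B astar b ∪ pureTensor A B a bstar ∈ C :=
          hC.2.2.2 astar a bstar b hastar.1.le hbstar.1.le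
        have hYM := lower_cover_lemma hastar hbstar (hC.1 Y hY)
          ⟨hlub.2.1, fun h => hab (h (mem_pureTensor_self a b))⟩
        have hZM := lower_cover_lemma hastar hbstar (hC.1 Z hZ)
          ⟨hlub.2.2.1, fun h => hab' (h (mem_pureTensor_self a b))⟩
        exact ab_notMem_mixed hastar hbstar
          (hlub.2.2.2 _ hM hYM hZM (mem_pureTensor_self a b))
  · intro a astar b bstar ha hb
    exact ⟨mixed_lt ha hb, fun W hW hWlt => lower_cover_lemma ha hb (hC.1 W hW) hWlt⟩
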